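/- Every subset S of C₁₀ such that any two distinct elements of S have Hamming distance at least 5 (equivalently, since all elements of C₁₀ have even weight, at least 6) satisfies |S| ≤ 192. -/
import Mathlib

set_option maxHeartbeats 16000000
set_option maxRecDepth 100000

def ENvec : Fin 32 → ℕ := ![0, 816, 1360, 1632, 4472, 4680, 5160, 5912, 8520, 8824, 9240, 10024, 12336, 13056, 13664, 13904, 16680, 16920, 17528, 18248, 20560, 21344, 21760, 22064, 24672, 25424, 25904, 26112, 28952, 29224, 29768, 30584]

def ofBits (n : ℕ) : Fin 4 × Fin 4 → ZMod 2 := fun p => if n.testBit (4 * p.1.val + p.2.val) then 1 else 0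

def eE (i : Fin 32) : Fin 4 × Fin 4 → ZMod 2 := ofBits (ENvec i)

def adjRow : Fin 32 → ℕ := ![4138519184, 4183606624, 4188224096, 4132648336, 1875553289, 2680511494, 2671420166, 1865765641, 2901840074, 1559847109, 2751029306, 1408667701, 3396274604, 3315533404, 983500451, 896469331, 3398497964, 3311466844, 979433891, 898692691, 2886299594, 1543937989, 2735120186, 1393127221, 2429201654, 1623547129, 1614455801, 2419414006, 162318959, 106743199, 111360671, 156448111]

def adjB (i j : Fin 32) : Bool := (adjRow i).testBit j.val
def pk3 (i j k : Fin 32) : ℕ := i.val + 32 * (j.val + 32 * k.val)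
def pk4 (i j k l : Fin 32) : ℕ := i.val + 32 * (j.val + 32 * (k.val + 32 * l.val))
def pk5 (i j k l m : Fin 32) : ℕ := i.val + 32 * (j.val + 32 * (k.val + 32 * (l.val + 32 * m.val)))

def L3a : List ℕ := [15716, 23908, 25956, 31076, 11748, 19940, 27108, 30180, 15972, 24164, 27236, 30308, 12004, 20196, 26340, 31460, 12068, 24356, 30500, 31524, 16196, 20292, 30532, 31556, 16292, 20388, 26532, 27556, 12228, 24516, 26564, 27588, 14631, 21799, 26919, 31015, 9671, 18887, 26055, 30151, 14919, 22087, 26183, 30279, 9895, 19111, 27303, 31399, 15143, 19239, 30503, 31527, 10055, 22343, 30535, 31559, 15271, 19367, 26535, 27559, 10183, 22471, 26567, 27591, 14569, 21737, 26857, 30953, 7625, 19913, 24009, 29129, 14953, 24169, 27241, 29289, 7849, 27305, 29353, 31401, 15081, 20201, 29417, 31465, 8009, 20297, 22345, 31561, 15241, 20361, 22409, 24457, 8137, 22473, 24521, 27593, 15499, 23691, 25739, 30859, 4587, 18923, 21995, 29163, 15947, 22091, 26187, 29259, 16043, 19115, 29355, 31403, 4843, 26347, 29419, 31467, 4907, 19243,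 24363, 31531, 16267, 19339, 22411, 24459, 5067, 22475, 24523, 26571, 9454, 18670, 25838, 29934, 7470, 19758, 23854, 28974, 7758, 26190, 29262, 30286, 9838, 24174, 29294, 30318, 9966, 20206, 26350, 29422, 7982, 19246, 24366, 30510, 10126, 19342, 20366, 24462, 8110, 19374, 20398, 26542, 11407, 19599, 26767, 29839, 4463, 18799, 21871, 29039, 11855, 22095, 29263, 30287, 4719, 27247, 29295, 30319, 11951, 19119, 27311, 29359, 4943, 20303, 22351, 30543, 12175, 19343, 20367, 22415, 5039, 19375, 20399, 27567, 14578, 21746, 25842, 29938, 15730, 21874, 25970, 29042, 7634, 26066, 29138, 30162, 11762, 22002, 29170, 30194, 7858, 11954, 16050, 29362, 7986, 12082, 15154, 30514, 12178, 15250, 16274, 22418, 8114, 15282, 16306, 26546, 15507, 23699, 26771, 29843, 14643, 23859, 26931, 28979, 9683, 24019, 29139, 30163, 4595, 27123, 29171, 30195]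

def L3b : List ℕ := [4851, 9971, 15091, 29427, 4947, 10067, 16211, 30547, 10131, 15251, 16275, 24467, 5043, 15283, 16307, 27571, 9461, 18677, 26869, 30965, 7477, 26933, 28981, 31029, 15733, 18805, 29045, 31093, 11765, 18933, 27125, 29173, 7765, 11861, 15957, 29269, 8021, 10069, 16213, 31573, 10133, 12181, 16277, 19349, 8149, 10197, 12245, 27605, 11415, 19607, 25751, 30871, 14647, 19767, 28983, 31031, 4471, 25975, 29047, 31095, 9687, 19927, 26071, 29143, 4727, 9847, 14967, 29303, 4919, 12087, 15159, 31543, 10135, 12183, 15255, 20375, 5079, 10199, 12247, 26583, 11417, 23705, 29849, 30873, 14585, 18681, 29945, 30969, 4473, 18809, 23929, 31097, 7641, 18905, 24025, 30169, 7769, 11865, 14937, 30297, 4857, 12025, 15097, 31481, 5049, 8121, 15289, 19385, 5081, 8153, 12249, 24537, 15514, 19610, 29850, 30874, 9466, 21754, 29946, 30970, 7482, 19770, 21818, 31034, 4602, 19962, 22010, 30202, 4730, 9850, 15994, 30330, 7866, 9914, 16058, 31418, 5050, 8122, 16314, 20410, 5082, 8154, 10202, 22490, 14652, 19772, 21820,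 23868, 15740, 18812, 21884, 23932, 9692, 18908, 19932, 24028, 11772, 18940, 19964, 22012, 11868, 14940, 15964, 22108, 9852, 14972, 15996, 24188, 9916, 11964, 16060, 19132, 9980, 12028, 15100, 20220, 15517, 19613, 25757, 26781, 14589, 18685, 25853, 26877, 7645, 18909, 19933, 26077, 4605, 18941, 19965, 27133, 7773, 14941, 15965, 26205, 4733, 14973, 15997, 27261, 4925, 7997, 15165, 19261, 4957, 8029, 16221, 20317, 11422, 23710, 25758, 26782, 9470, 21758, 25854, 26878, 7486, 21822, 23870, 26942, 4478, 21886, 23934, 25982, 7870, 9918, 11966, 27326, 4862, 9982, 12030, 26366, 4926, 7998, 12094, 24382, 4958, 8030, 10078, 22366]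

def L4a : List ℕ := [843108, 1006948, 779620, 1008996, 784740, 850276, 871908, 970212, 649700, 977380, 652772, 882148, 867940, 966244, 518756, 977508, 521828, 882276, 831204, 995044, 386788, 1009380, 391908, 850660, 765732, 995108, 384804, 1007396, 391972, 785188, 638788, 966468, 511812, 970564, 522052, 653124, 638884, 868260, 511908, 872356, 519076, 650148, 765892, 831428, 384964, 843716, 387012, 780228, 873767, 1004839, 715047, 1009959, 719143, 882983, 838087, 969159, 615879, 976327, 619975, 849351, 834119, 965191, 484935, 976455, 489031, 849479, 861863, 992935, 322215, 1010343, 326311, 883367, 604967, 965415, 477991, 969511, 489255, 620327, 698183, 993095, 317255, 1005383, 326471, 719687, 605095, 834471, 478119, 838567, 485287, 616359, 698311, 862151, 317383, 874439, 322503, 715719, 873705, 1004777, 714985, 1009897, 719081, 882921, 773577, 937417, 646601, 941513, 651721, 782793, 768617, 932457, 482921, 941673, 488041, 782953, 859817, 990889, 256681, 1010345, 260777, 883369, 637673, 932585, 478953, 937705, 488169, 652009, 696137, 991049, 251721, 1005385, 260937, 719689, 637833, 768905, 479113, 774025, 483209, 647049, 696265, 860105, 251849, 874441, 256969, 715721,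 842891, 1006731, 779403, 1008779, 784523, 850059, 707051, 936427, 611819, 939499, 618987, 717291, 704075, 933451, 513611, 939595, 520779, 717387, 605867, 933547, 510635, 936619, 520875, 619179, 824043, 987883, 157419, 1009387, 162539, 850667, 758571, 987947, 155435, 1007403, 162603, 785195, 606091, 704395, 510859, 707467, 513931, 612235, 758731, 824267, 155595, 843723, 157643, 780235, 837870, 968942, 615662, 976110, 619758, 849134, 773422, 937262, 646446, 941358, 651566, 782638, 826958, 958030, 255566, 976462, 259662, 849486, 763502, 927342, 319086, 941678, 324206, 782958, 632558, 927470, 315118, 937710, 324334, 652014, 597806, 958254, 248622, 969518, 259886, 620334, 632718, 763790, 315278, 774030, 319374, 647054, 597934, 827310, 248750, 838574, 255918, 616366]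

def L4b : List ℕ := [871567, 969871, 649359, 977039, 652431, 881807, 706927, 936303, 611695, 939375, 618863, 717167, 699983, 929359, 382543, 939599, 389711, 717391, 856687, 954991, 158319, 977519, 161391, 882287, 601775, 929455, 379567, 936623, 389807, 619183, 627535, 955215, 151375, 970575, 161615, 653135, 601999, 700303, 379791, 707471, 382863, 612239, 627631, 857007, 151471, 872367, 158639, 650159, 833778, 964850, 484594, 976114, 488690, 849138, 703858, 933234, 513394, 939378, 520562, 717170, 826834, 957906, 255442, 976338, 259538, 849362, 699890, 929266, 382450, 939506, 389618, 717298, 503474, 929458, 376498, 933554, 389810, 520882, 466738, 958258, 244530, 965426, 259890, 489266, 503698, 700306, 376722, 704402, 382866, 513938, 466866, 827314, 244658, 834482, 255922, 485298, 867475, 965779, 518291, 977043, 521363, 881811, 768307, 932147, 482611, 941363, 487731, 782643, 763347, 927187, 318931, 941523, 324051, 782803, 856563, 954867, 158195, 977395, 161267, 882163, 468723, 927475, 310003, 932595, 324339, 488179, 496467, 955219, 147283, 966483, 161619, 522067, 468883, 763795, 310163, 768915, 319379, 483219, 496563, 857011, 147379, 868275, 158643, 519091, 861429, 992501, 321781,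 1009909, 325877, 882933, 859445, 990517, 256309, 1009973, 260405, 882997, 605557, 933237, 510325, 936309, 520565, 618869, 601589, 929269, 379381, 936437, 389621, 618997, 503381, 929365, 376405, 933461, 389717, 520789, 302933, 991061, 239445, 993109, 260949, 326485, 503701, 602005, 376725, 606101, 379797, 510869, 303061, 860117, 239573, 862165, 256981, 322517, 830615, 994455, 386199, 1008791, 391319, 850071, 637239, 932151, 478519, 937271, 487735, 651575, 823671, 987511, 157047, 1009015, 162167, 850295, 632279, 927191, 314839, 937431, 324055, 651735, 468599, 927351, 309879, 932471, 324215, 488055, 365367, 987959, 143159, 995127, 162615, 391991, 468887, 632727, 310167, 637847, 315287, 479127, 365527, 824279, 143319, 831447, 157655, 387031]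

def L4c : List ℕ := [765081, 994457, 384153, 1006745, 391321, 784537, 604409, 964857, 477433, 968953, 488697, 619769, 758137, 987513, 155001, 1006969, 162169, 784761, 597465, 957913, 248281, 969177, 259545, 619993, 466521, 958041, 244313, 965209, 259673, 489049, 365305, 987897, 143097, 995065, 162553, 391929, 466873, 597945, 244665, 605113, 248761, 478137, 365529, 758745, 143321, 765913, 155609, 384985, 638106, 965786, 511130, 969882, 521370, 652442, 697594, 992506, 316666, 1004794, 325882, 719098, 695610, 990522, 251194, 1004858, 260410, 719162, 627194, 954874, 151034, 970234, 161274, 652794, 496250, 955002, 147066, 966266, 161402, 521850, 302778, 990906, 239290, 992954, 260794, 326330, 496570, 627642, 147386, 638906, 151482, 511930, 303066, 696282, 239578, 698330, 251866, 317402, 637244, 768316, 478524, 773436, 482620, 646460, 605564, 703868, 510332, 706940, 513404, 611708, 632284, 763356, 314844, 773596, 318940, 646620, 601596, 699900, 379388, 707068, 382460, 611836, 503388, 699996, 376412, 704092, 382556, 513628, 468604, 763516, 309884, 768636, 319100, 482940, 503484, 601788, 376508, 605884, 379580, 510652, 468732, 632572, 310012, 637692, 315132, 478972, 638109, 867485,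 511133, 871581, 518301, 649373, 604413, 833789, 477437, 837885, 484605, 615677, 597469, 826845, 248285, 838109, 255453, 615901, 627197, 856573, 151037, 871933, 158205, 649725, 466525, 826973, 244317, 834141, 255581, 484957, 496253, 856701, 147069, 867965, 158333, 518781, 466749, 597821, 244541, 604989, 248637, 478013, 496477, 627549, 147293, 638813, 151389, 511837, 765086, 830622, 384158, 842910, 386206, 779422, 697598, 861438, 316670, 873726, 321790, 715006, 695614, 859454, 251198, 873790, 256318, 715070, 758142, 823678, 155006, 843134, 157054, 779646, 302782, 859838, 239294, 861886, 256702, 322238, 365310, 824062, 143102, 831230, 157438, 386814, 365374, 758590, 143166, 765758, 155454, 384830, 302942, 696158, 239454, 698206, 251742, 317278]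

def L5a : List ℕ := [32300388, 27221348, 32236900, 25126244, 26999140, 24967524, 31280612, 28233188, 31058404, 20900324, 27915748, 20805092, 31276644, 28229220, 30927460, 16706148, 27784804, 16610916, 32288484, 27209444, 31844068, 12543716, 26606308, 12384996, 32223012, 25112356, 31842084, 12541732, 24509220, 12319524, 31047492, 20889412, 30920516, 16699204, 20444996, 16381764, 27901860, 20791204, 27774884, 16600996, 20442020, 16378788, 26980292, 24948676, 26599364, 12378052, 24504260, 12314564, 32331047, 28267815, 32172327, 23030055, 27982119, 22903079, 31246791, 27183559, 31024583, 19850695, 26834375, 19723719, 31242823, 27179591, 30893639, 15656519, 26703431, 15529543, 32319143, 28255911, 31779495, 10447527, 27589287, 10320551, 31013671, 19839783, 30886695, 15649575, 19363623, 15300391, 32155463, 23013191, 31774535, 10442567, 22346567, 10156871, 26819495, 19708839, 26692519, 15518631, 19359655, 15296423, 27961287, 22882247, 27580359, 10311623, 22342599, 10152903, 32330985, 28267753, 32172265, 23029993, 27982057, 22903017, 30133705, 25054665, 30006729, 20864457, 24768969, 20705737, 30128745, 25049705, 29843049, 15621737, 24605289, 15463017, 32317097, 28253865, 31713961, 8350377,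 27523753, 8223401, 29997801, 20855529, 29839081, 15617769, 20411113, 15332073, 32153417, 23011145, 31709001, 8345417, 22281033, 8059721, 24755081, 20691849, 24596361, 15454089, 20406153, 15327113, 27959241, 22880201, 27514825, 8214473, 22277065, 8055753, 32300171, 27221131, 32236683, 25126027, 26998923, 24967307, 30067179, 22956523, 29971947, 19813867, 22639083, 19591659, 30064203, 22953547, 29873739, 16668235, 22540875, 16446027, 29965995, 19807915, 29870763, 16665259, 19395243, 16347819, 32281323, 27202283, 31614699, 5203691, 26376939, 5044971, 32215851, 25105195, 31612715, 5201707, 24279851, 4979499, 22626187, 19578763, 22530955, 16436107, 19388299, 16340875, 26973131, 24941515, 26369995, 5038027, 24274891, 4974539, 31246574, 27183342, 31024366, 19850478, 26834158, 19723502, 30133550, 25054510, 30006574, 20864302, 24768814, 20705582, 31235662, 27172430, 30664270, 8316494, 26474062, 8189518, 30123630, 25044590, 29679214, 10378862, 24441454, 10220142, 29992686, 20850414, 29675246, 10374894, 20247278, 10089198, 31006510, 19832622, 30657326, 8309550, 19134254, 7960366, 24749966, 20686734, 24432526, 10211214, 20242318, 10084238, 26812334, 19701678, 26463150, 8178606,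 19130286, 7956398]

def L5b : List ℕ := [31280271, 28232847, 31058063, 20899983, 27915407, 20804751, 30067055, 22956399, 29971823, 19813743, 22638959, 19591535, 30060111, 22949455, 29742671, 12473935, 22409807, 12251727, 31265391, 28217967, 30567023, 5171823, 27424367, 5076591, 29961903, 19803823, 29739695, 12470959, 19264175, 12153519, 31036239, 20878159, 30560079, 5164879, 20084559, 4847439, 22622095, 19574671, 22399887, 12241807, 19257231, 12146575, 27890607, 20779951, 27414447, 5066671, 20081583, 4844463, 31242482, 27179250, 30893298, 15656178, 26703090, 15529202, 30063986, 22953330, 29873522, 16668018, 22540658, 16445810, 31235538, 27172306, 30664146, 8316370, 26473938, 8189394, 30060018, 22949362, 29742578, 12473842, 22409714, 12251634, 29863602, 16658098, 29736626, 12467890, 16118450, 12055218, 30875442, 15638322, 30653234, 8305458, 14939954, 7829298, 22523794, 16428946, 22396818, 12238738, 16111506, 12048274, 26681266, 15507378, 26459058, 8174514, 14935986, 7825330, 31276179, 28228755, 30926995, 16705683, 27784339, 16610451, 30128435, 25049395, 29842739, 15621427, 24604979, 15462707, 30123475, 25044435, 29679059, 10378707, 24441299, 10219987, 31265267, 28217843,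 30566899, 5171699, 27424243, 5076467, 29828851, 15607539, 29670131, 10369779, 15004403, 9925363, 30905171, 16683859, 30555987, 5160787, 15890259, 4716371, 24586131, 15443859, 24427411, 10206099, 14999443, 9920403, 27759539, 16585651, 27410355, 5062579, 15887283, 4713395, 32318709, 28255477, 31779061, 10447093, 27588853, 10320117, 32316725, 28253493, 31713589, 8350005, 27523381, 8223029, 29965685, 19807605, 29870453, 16664949, 19394933, 16347509, 29961717, 19803637, 29739509, 12470773, 19263989, 12153333, 29863509, 16658005, 29736533, 12467797, 16118357, 12055125, 31760213, 10428245, 31696725, 8333141, 9698133, 7666517, 19378069, 16330645, 19251093, 12140437, 16108437, 12045205, 27566037, 10297301, 27502549, 8202197, 9694165, 7662549, 32287895, 27208855, 31843479, 12543127, 26605719, 12384407, 29997367, 20855095, 29838647, 15617335, 20410679, 15331639, 32280951, 27201911, 31614327, 5203319, 26376567, 5044599, 29992407, 20850135, 29674967, 10374615, 20246999, 10088919, 29828727, 15607415, 29670007, 10369655, 15004279, 9925239, 31822647, 12522295, 31600439, 5189431, 11696951, 4586295, 20391831, 15312791, 20233111, 10075031, 14995351, 9916311, 26579927, 12358615,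 26357719, 5025751, 11691991, 4581335]

def L5c : List ℕ := [32222361, 25111705, 31841433, 12541081, 24508569, 12318873, 31013113, 19839225, 30886137, 15649017, 19363065, 15299833, 32215417, 25104761, 31612281, 5201273, 24279417, 4979065, 31006169, 19832281, 30656985, 8309209, 19133913, 7960025, 30875225, 15638105, 30653017, 8305241, 14939737, 7829081, 31822585, 12522233, 31600377, 5189369, 11696889, 4586233, 19341241, 15278009, 19119033, 7945145, 14928825, 7818169, 24482777, 12293081, 24260569, 4960217, 11689945, 4579289, 31046810, 20888730, 30919834, 16698522, 20444314, 16381082, 32154874, 23012602, 31773946, 10441978, 22345978, 10156282, 32152890, 23010618, 31708474, 8344890, 22280506, 8059194, 31035898, 20877818, 30559738, 5164538, 20084218, 4847098, 30904954, 16683642, 30555770, 5160570, 15890042, 4716154, 31760058, 10428090, 31696570, 8332986, 9697978, 7666362, 20419514, 16356282, 20070330, 4833210, 15880122, 4706234, 22323162, 10133466, 22259674, 8038362, 9689050, 7657434, 24754492, 20691260, 24595772, 15453500, 20405564, 15326524, 22625660, 19578236, 22530428, 16435580, 19387772, 16340348, 24749532, 20686300, 24432092, 10210780, 20241884, 10083804,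 22621692, 19574268, 22399484, 12241404, 19256828, 12146172, 22523484, 16428636, 22396508, 12238428, 16111196, 12047964, 24585852, 15443580, 24427132, 10205820, 14999164, 9920124, 19377852, 16330428, 19250876, 12140220, 16108220, 12044988, 20391676, 15312636, 20232956, 10074876, 14995196, 9916156, 27901085, 20790429, 27774109, 16600221, 20441245, 16378013, 26818813, 19708157, 26691837, 15517949, 19358973, 15295741, 26811869, 19701213, 26462685, 8178141, 19129821, 7955933, 27890173, 20779517, 27414013, 5066237, 20081149, 4844029, 26680925, 15507037, 26458717, 8174173, 14935645, 7824989, 27759229, 16585341, 27410045, 5062269, 15886973, 4713085, 19341117, 15277885, 19118909, 7945021, 14928701, 7818045, 20419421, 16356189, 20070237, 4833117, 15880029, 4706141, 26979486, 24947870, 26598558, 12377246, 24503454, 12313758, 27960574, 22881534, 27579646, 10310910, 22341886, 10152190, 27958590, 22879550, 27514174, 8213822, 22276414, 8055102, 26972542, 24940926, 26369406, 5037438, 24274302, 4973950, 27565758, 10297022, 27502270, 8201918, 9693886, 7662270, 26579710, 12358398, 26357502, 5025534, 11691774, 4581118, 24482622, 12292926, 24260414, 4960062, 11689790, 4579134,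 22323038, 10133342, 22259550, 8038238, 9688926, 7657310]


def expandM (a b c d e f g h i s : ZMod 2) : Fin 4 × Fin 4 → ZMod 2 := fun p =>
  !![a, b, c, s-a-b-c;
     d, e, f, s-d-e-f;
     g, h, i, s-g-h-i;
     s-a-d-g, s-b-e-h, s-c-f-i, s-(s-a-b-c)-(s-d-e-f)-(s-g-h-i)] p.1 p.2

def u0 (n : ℕ) : Fin 32 := ⟨n % 32, Nat.mod_lt _ (by norm_num)⟩
def u1 (n : ℕ) : Fin 32 := ⟨n / 32 % 32, Nat.mod_lt _ (by norm_num)⟩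
def u2 (n : ℕ) : Fin 32 := ⟨n / 1024 % 32, Nat.mod_lt _ (by norm_num)⟩
def u3 (n : ℕ) : Fin 32 := ⟨n / 32768 % 32, Nat.mod_lt _ (by norm_num)⟩
def u4 (n : ℕ) : Fin 32 := ⟨n / 1048576 % 32, Nat.mod_lt _ (by norm_num)⟩

theorem D3 : ∀ i1 i2 i3 : Fin 32, (adjB i1 i2 && adjB i1 i3 && adjB i2 i3 && adjB 0 i1
    && adjB 0 i2 && adjB 0 i3) = true → pk3 i1 i2 i3 ∈ L3a ∨ pk3 i1 i2 i3 ∈ L3b := by decide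

theorem D4a : ∀ n ∈ L3a, ∀ i4 : Fin 32, (adjB 0 i4 && adjB (u0 n) i4 && adjB (u1 n) i4
    && adjB (u2 n) i4) = true → n + 32768 * i4.val ∈ L4a ∨ n + 32768 * i4.val ∈ L4b
    ∨ n + 32768 * i4.val ∈ L4c := by decide

theorem D4b : ∀ n ∈ L3b, ∀ i4 : Fin 32, (adjB 0 i4 && adjB (u0 n) i4 && adjB (u1 n) i4
    && adjB (u2 n) i4) = true → n + 32768 * i4.val ∈ L4a ∨ n + 32768 * i4.val ∈ L4b
    ∨ n + 32768 * i4.val ∈ L4c := by decide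

theorem D5a : ∀ n ∈ L4a, ∀ i5 : Fin 32, (adjB 0 i5 && adjB (u0 n) i5 && adjB (u1 n) i5
    && adjB (u2 n) i5 && adjB (u3 n) i5) = true → n + 1048576 * i5.val ∈ L5a
    ∨ n + 1048576 * i5.val ∈ L5b ∨ n + 1048576 * i5.val ∈ L5c := by decide

theorem D5b : ∀ n ∈ L4b, ∀ i5 : Fin 32, (adjB 0 i5 && adjB (u0 n) i5 && adjB (u1 n) i5
    && adjB (u2 n) i5 && adjB (u3 n) i5) = true → n + 1048576 * i5.val ∈ L5a
    ∨ n + 1048576 * i5.val ∈ L5b ∨ n + 1048576 * i5.val ∈ L5c := by decide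

theorem D5c : ∀ n ∈ L4c, ∀ i5 : Fin 32, (adjB 0 i5 && adjB (u0 n) i5 && adjB (u1 n) i5
    && adjB (u2 n) i5 && adjB (u3 n) i5) = true → n + 1048576 * i5.val ∈ L5a
    ∨ n + 1048576 * i5.val ∈ L5b ∨ n + 1048576 * i5.val ∈ L5c := by decide

theorem D6a : ∀ n ∈ L5a, ∀ i6 : Fin 32, ¬((adjB 0 i6 && adjB (u0 n) i6 && adjB (u1 n) i6
    && adjB (u2 n) i6 && adjB (u3 n) i6 && adjB (u4 n) i6) = true) := by decide

theorem D6b : ∀ n ∈ L5b, ∀ i6 : Fin 32, ¬((adjB 0 i6 && adjB (u0 n) i6 && adjB (u1 n) i6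
    && adjB (u2 n) i6 && adjB (u3 n) i6 && adjB (u4 n) i6) = true) := by decide

theorem D6c : ∀ n ∈ L5c, ∀ i6 : Fin 32, ¬((adjB 0 i6 && adjB (u0 n) i6 && adjB (u1 n) i6
    && adjB (u2 n) i6 && adjB (u3 n) i6 && adjB (u4 n) i6) = true) := by decide

theorem memE : ∀ a b c d e f g h i s : ZMod 2,
    (expandM a b c d e f g h i s (0,0) = 0 ∧ expandM a b c d e f g h i s (0,1) = 0 ∧
     expandM a b c d e f g h i s (0,2) = 0 ∧ expandM a b c d e f g h i s (1,3) = 0 ∧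
     expandM a b c d e f g h i s (2,3) = 0) →
    ∃ k : Fin 32, expandM a b c d e f g h i s = eE k := by decide

theorem adj_iff : ∀ i j : Fin 32, adjB i j = true ↔ 5 ≤ hammingDist (eE i) (eE j) := by decide

-- u/pk lemmas
theorem u0_pk3 (i j k : Fin 32) : u0 (pk3 i j k) = i := by
  have hi := i.isLt; apply Fin.ext
  show (i.val + 32 * (j.val + 32 * k.val)) % 32 = i.val; omega
theorem u1_pk3 (i j k : Fin 32) : u1 (pk3 i j k) = j := by
  have hi := i.isLt; have hj := j.isLt; apply Fin.ext
  show (i.val + 32 * (j.val + 32 * k.val)) / 32 % 32 = j.val; omega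
theorem u2_pk3 (i j k : Fin 32) : u2 (pk3 i j k) = k := by
  have hi := i.isLt; have hj := j.isLt; have hk := k.isLt; apply Fin.ext
  show (i.val + 32 * (j.val + 32 * k.val)) / 1024 % 32 = k.val; omega
theorem pk4_eq (i j k l : Fin 32) : pk3 i j k + 32768 * l.val = pk4 i j k l := by
  show i.val + 32 * (j.val + 32 * k.val) + 32768 * l.val
      = i.val + 32 * (j.val + 32 * (k.val + 32 * l.val)); ring
theorem u0_pk4 (i j k l : Fin 32) : u0 (pk4 i j k l) = i := by
  have hi := i.isLt; apply Fin.ext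
  show (i.val + 32 * (j.val + 32 * (k.val + 32 * l.val))) % 32 = i.val; omega
theorem u1_pk4 (i j k l : Fin 32) : u1 (pk4 i j k l) = j := by
  have hi := i.isLt; have hj := j.isLt; apply Fin.ext
  show (i.val + 32 * (j.val + 32 * (k.val + 32 * l.val))) / 32 % 32 = j.val; omega
theorem u2_pk4 (i j k l : Fin 32) : u2 (pk4 i j k l) = k := by
  have hi := i.isLt; have hj := j.isLt; have hk := k.isLt; apply Fin.ext
  show (i.val + 32 * (j.val + 32 * (k.val + 32 * l.val))) / 1024 % 32 = k.val; omega
theorem u3_pk4 (i j k l : Fin 32) : u3 (pk4 i j k l) = l := by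
  have hi := i.isLt; have hj := j.isLt; have hk := k.isLt; have hl := l.isLt; apply Fin.ext
  show (i.val + 32 * (j.val + 32 * (k.val + 32 * l.val))) / 32768 % 32 = l.val; omega
theorem pk5_eq (i j k l m : Fin 32) : pk4 i j k l + 1048576 * m.val = pk5 i j k l m := by
  show i.val + 32 * (j.val + 32 * (k.val + 32 * l.val)) + 1048576 * m.val
      = i.val + 32 * (j.val + 32 * (k.val + 32 * (l.val + 32 * m.val))); ring
theorem u0_pk5 (i j k l m : Fin 32) : u0 (pk5 i j k l m) = i := by
  have hi := i.isLt; apply Fin.ext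
  show (i.val + 32 * (j.val + 32 * (k.val + 32 * (l.val + 32 * m.val)))) % 32 = i.val; omega
theorem u1_pk5 (i j k l m : Fin 32) : u1 (pk5 i j k l m) = j := by
  have hi := i.isLt; have hj := j.isLt; apply Fin.ext
  show (i.val + 32 * (j.val + 32 * (k.val + 32 * (l.val + 32 * m.val)))) / 32 % 32 = j.val; omega
theorem u2_pk5 (i j k l m : Fin 32) : u2 (pk5 i j k l m) = k := by
  have hi := i.isLt; have hj := j.isLt; have hk := k.isLt; apply Fin.ext
  show (i.val + 32 * (j.val + 32 * (k.val + 32 * (l.val + 32 * m.val)))) / 1024 % 32 = k.val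
  omega
theorem u3_pk5 (i j k l m : Fin 32) : u3 (pk5 i j k l m) = l := by
  have hi := i.isLt; have hj := j.isLt; have hk := k.isLt; have hl := l.isLt; apply Fin.ext
  show (i.val + 32 * (j.val + 32 * (k.val + 32 * (l.val + 32 * m.val)))) / 32768 % 32 = l.val
  omega
theorem u4_pk5 (i j k l m : Fin 32) : u4 (pk5 i j k l m) = m := by
  have hi := i.isLt; have hj := j.isLt; have hk := k.isLt; have hl := l.isLt; have hm := m.isLt
  apply Fin.ext
  show (i.val + 32 * (j.val + 32 * (k.val + 32 * (l.val + 32 * m.val)))) / 1048576 % 32 = m.val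
  omega

/-- `C₁₀`: the set of `4×4` matrices over `𝔽₂` all of whose four row sums and
four column sums are equal to one common value in `𝔽₂`. -/
def C10 : Set (Fin 4 × Fin 4 → ZMod 2) :=
  {m | ∃ s : ZMod 2, (∀ i : Fin 4, ∑ j : Fin 4, m (i, j) = s) ∧
        (∀ j : Fin 4, ∑ i : Fin 4, m (i, j) = s)}

theorem C10_sub {x y : Fin 4 × Fin 4 → ZMod 2} (hx : x ∈ C10) (hy : y ∈ C10) :
    x - y ∈ C10 := by
  obtain ⟨s, hr, hc⟩ := hx
  obtain ⟨t, kr, kc⟩ := hy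
  refine ⟨s - t, fun i => ?_, fun j => ?_⟩
  · simp only [Pi.sub_apply, Finset.sum_sub_distrib, hr i, kr i]
  · simp only [Pi.sub_apply, Finset.sum_sub_distrib, hc j, kc j]

theorem hd_shift (z a b : Fin 4 × Fin 4 → ZMod 2) :
    hammingDist (z - a) (z - b) = hammingDist a b := by
  simp only [hammingDist]
  congr 1
  ext p
  simp [sub_right_inj, Ne]

theorem repr_C10 {v : Fin 4 × Fin 4 → ZMod 2} (hv : v ∈ C10) :
    ∃ s : ZMod 2, v = expandM (v (0,0)) (v (0,1)) (v (0,2)) (v (1,0)) (v (1,1)) (v (1,2))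
      (v (2,0)) (v (2,1)) (v (2,2)) s := by
  obtain ⟨s, hr, hc⟩ := hv
  refine ⟨s, ?_⟩
  have hr0 := hr 0; have hr1 := hr 1; have hr2 := hr 2; have hr3 := hr 3
  have hc0 := hc 0; have hc1 := hc 1; have hc2 := hc 2; have hc3 := hc 3
  rw [Fin.sum_univ_four] at hr0 hr1 hr2 hr3 hc0 hc1 hc2 hc3
  funext p
  have hp : p = ((0:Fin 4),(0:Fin 4)) ∨ p = (0,1) ∨ p = (0,2) ∨ p = (0,3) ∨
      p = (1,0) ∨ p = (1,1) ∨ p = (1,2) ∨ p = (1,3) ∨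
      p = (2,0) ∨ p = (2,1) ∨ p = (2,2) ∨ p = (2,3) ∨
      p = (3,0) ∨ p = (3,1) ∨ p = (3,2) ∨ p = (3,3) := by
    revert p; decide
  rcases hp with h|h|h|h|h|h|h|h|h|h|h|h|h|h|h|h <;> subst h
  · rfl
  · rfl
  · rfl
  · show v (0,3) = s - v (0,0) - v (0,1) - v (0,2)
    linear_combination hr0
  · rfl
  · rfl
  · rfl
  · show v (1,3) = s - v (1,0) - v (1,1) - v (1,2)
    linear_combination hr1
  · rfl
  · rfl
  · rfl
  · show v (2,3) = s - v (2,0) - v (2,1) - v (2,2)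
    linear_combination hr2
  · show v (3,0) = s - v (0,0) - v (1,0) - v (2,0)
    linear_combination hc0
  · show v (3,1) = s - v (0,1) - v (1,1) - v (2,1)
    linear_combination hc1
  · show v (3,2) = s - v (0,2) - v (1,2) - v (2,2)
    linear_combination hc2
  · show v (3,3) = s - (s - v (0,0) - v (0,1) - v (0,2)) - (s - v (1,0) - v (1,1) - v (1,2))
        - (s - v (2,0) - v (2,1) - v (2,2))
    linear_combination hc3 - hr0 - hr1 - hr2

theorem getIndex {x y : Fin 4 × Fin 4 → ZMod 2} (hx : x ∈ C10) (hy : y ∈ C10)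
    (h1 : (x - y) (0,0) = 0) (h2 : (x - y) (0,1) = 0) (h3 : (x - y) (0,2) = 0)
    (h4 : (x - y) (1,3) = 0) (h5 : (x - y) (2,3) = 0) :
    ∃ k : Fin 32, x - y = eE k := by
  obtain ⟨s, hs⟩ := repr_C10 (C10_sub hx hy)
  obtain ⟨k, hk⟩ := memE _ _ _ _ _ _ _ _ _ s
    ⟨by rw [← hs]; exact h1, by rw [← hs]; exact h2, by rw [← hs]; exact h3,
     by rw [← hs]; exact h4, by rw [← hs]; exact h5⟩
  exact ⟨k, by rw [hs, hk]⟩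

theorem adj_of {k l : Fin 32} {z a b : Fin 4 × Fin 4 → ZMod 2}
    (hk : z - a = eE k) (hl : z - b = eE l) (hd : 5 ≤ hammingDist a b) :
    adjB k l = true := by
  rw [adj_iff, ← hk, ← hl, hd_shift]; exact hd

theorem eE_zero : eE 0 = (fun _ => 0 : Fin 4 × Fin 4 → ZMod 2) := by decide

/-- Any subset of `C₁₀` whose distinct elements are at Hamming distance at least 5
(equivalently, since `C₁₀` is an even code, at least 6) has at most 192 elements. -/
theorem subcode_C10_minDist_five_card_le :
    ∀ S : Finset (Fin 4 × Fin 4 → ZMod 2),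
      (↑S : Set (Fin 4 × Fin 4 → ZMod 2)) ⊆ C10 →
      (∀ x ∈ S, ∀ y ∈ S, x ≠ y → 5 ≤ hammingDist x y) →
      S.card ≤ 192 := by
  intro S hsub hdist
  classical
  set f : (Fin 4 × Fin 4 → ZMod 2) → ZMod 2 × ZMod 2 × ZMod 2 × ZMod 2 × ZMod 2 :=
    fun x => (x (0,0), x (0,1), x (0,2), x (1,3), x (2,3)) with hf
  have key : ∀ w, (S.filter (fun x => f x = w)).card ≤ 6 := by
    intro w
    by_contra hcon
    push_neg at hcon
    set T := S.filter (fun x => f x = w) with hT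
    -- extract 7 distinct elements
    obtain ⟨x1, hm1⟩ := Finset.card_pos.mp (show 0 < T.card by omega)
    have c1 : 6 ≤ (T.erase x1).card := by rw [Finset.card_erase_of_mem hm1]; omega
    obtain ⟨x2, hm2⟩ := Finset.card_pos.mp (show 0 < (T.erase x1).card by omega)
    have c2 : 5 ≤ ((T.erase x1).erase x2).card := by
      rw [Finset.card_erase_of_mem hm2]; omega
    obtain ⟨x3, hm3⟩ := Finset.card_pos.mp (show 0 < ((T.erase x1).erase x2).card by omega)
    have c3 : 4 ≤ (((T.erase x1).erase x2).erase x3).card := by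
      rw [Finset.card_erase_of_mem hm3]; omega
    obtain ⟨x4, hm4⟩ := Finset.card_pos.mp
      (show 0 < (((T.erase x1).erase x2).erase x3).card by omega)
    have c4 : 3 ≤ ((((T.erase x1).erase x2).erase x3).erase x4).card := by
      rw [Finset.card_erase_of_mem hm4]; omega
    obtain ⟨x5, hm5⟩ := Finset.card_pos.mp
      (show 0 < ((((T.erase x1).erase x2).erase x3).erase x4).card by omega)
    have c5 : 2 ≤ (((((T.erase x1).erase x2).erase x3).erase x4).erase x5).card := by
      rw [Finset.card_erase_of_mem hm5]; omega
    obtain ⟨x6, hm6⟩ := Finset.card_pos.mp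
      (show 0 < (((((T.erase x1).erase x2).erase x3).erase x4).erase x5).card by omega)
    have c6 : 1 ≤ ((((((T.erase x1).erase x2).erase x3).erase x4).erase x5).erase x6).card := by
      rw [Finset.card_erase_of_mem hm6]; omega
    obtain ⟨x7, hm7⟩ := Finset.card_pos.mp
      (show 0 < ((((((T.erase x1).erase x2).erase x3).erase x4).erase x5).erase x6).card by omega)
    -- memberships in T
    have t7 : x7 ∈ T := Finset.mem_of_mem_erase (Finset.mem_of_mem_erase
      (Finset.mem_of_mem_erase (Finset.mem_of_mem_erase (Finset.mem_of_mem_erase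
      (Finset.mem_of_mem_erase hm7)))))
    have t6 : x6 ∈ T := Finset.mem_of_mem_erase (Finset.mem_of_mem_erase
      (Finset.mem_of_mem_erase (Finset.mem_of_mem_erase (Finset.mem_of_mem_erase hm6))))
    have t5 : x5 ∈ T := Finset.mem_of_mem_erase (Finset.mem_of_mem_erase
      (Finset.mem_of_mem_erase (Finset.mem_of_mem_erase hm5)))
    have t4 : x4 ∈ T := Finset.mem_of_mem_erase (Finset.mem_of_mem_erase
      (Finset.mem_of_mem_erase hm4))
    have t3 : x3 ∈ T := Finset.mem_of_mem_erase (Finset.mem_of_mem_erase hm3)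
    have t2 : x2 ∈ T := Finset.mem_of_mem_erase hm2
    have t1 : x1 ∈ T := hm1
    -- pairwise distinctness
    have n21 : x2 ≠ x1 := Finset.ne_of_mem_erase hm2
    have n31 : x3 ≠ x1 := Finset.ne_of_mem_erase (Finset.mem_of_mem_erase hm3)
    have n32 : x3 ≠ x2 := Finset.ne_of_mem_erase hm3
    have n41 : x4 ≠ x1 := Finset.ne_of_mem_erase (Finset.mem_of_mem_erase
      (Finset.mem_of_mem_erase hm4))
    have n42 : x4 ≠ x2 := Finset.ne_of_mem_erase (Finset.mem_of_mem_erase hm4)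
    have n43 : x4 ≠ x3 := Finset.ne_of_mem_erase hm4
    have n51 : x5 ≠ x1 := Finset.ne_of_mem_erase (Finset.mem_of_mem_erase
      (Finset.mem_of_mem_erase (Finset.mem_of_mem_erase hm5)))
    have n52 : x5 ≠ x2 := Finset.ne_of_mem_erase (Finset.mem_of_mem_erase
      (Finset.mem_of_mem_erase hm5))
    have n53 : x5 ≠ x3 := Finset.ne_of_mem_erase (Finset.mem_of_mem_erase hm5)
    have n54 : x5 ≠ x4 := Finset.ne_of_mem_erase hm5
    have n61 : x6 ≠ x1 := Finset.ne_of_mem_erase (Finset.mem_of_mem_erase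
      (Finset.mem_of_mem_erase (Finset.mem_of_mem_erase (Finset.mem_of_mem_erase hm6))))
    have n62 : x6 ≠ x2 := Finset.ne_of_mem_erase (Finset.mem_of_mem_erase
      (Finset.mem_of_mem_erase (Finset.mem_of_mem_erase hm6)))
    have n63 : x6 ≠ x3 := Finset.ne_of_mem_erase (Finset.mem_of_mem_erase
      (Finset.mem_of_mem_erase hm6))
    have n64 : x6 ≠ x4 := Finset.ne_of_mem_erase (Finset.mem_of_mem_erase hm6)
    have n65 : x6 ≠ x5 := Finset.ne_of_mem_erase hm6
    have n71 : x7 ≠ x1 := Finset.ne_of_mem_erase (Finset.mem_of_mem_erase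
      (Finset.mem_of_mem_erase (Finset.mem_of_mem_erase (Finset.mem_of_mem_erase
      (Finset.mem_of_mem_erase hm7)))))
    have n72 : x7 ≠ x2 := Finset.ne_of_mem_erase (Finset.mem_of_mem_erase
      (Finset.mem_of_mem_erase (Finset.mem_of_mem_erase (Finset.mem_of_mem_erase hm7))))
    have n73 : x7 ≠ x3 := Finset.ne_of_mem_erase (Finset.mem_of_mem_erase
      (Finset.mem_of_mem_erase (Finset.mem_of_mem_erase hm7)))
    have n74 : x7 ≠ x4 := Finset.ne_of_mem_erase (Finset.mem_of_mem_erase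
      (Finset.mem_of_mem_erase hm7))
    have n75 : x7 ≠ x5 := Finset.ne_of_mem_erase (Finset.mem_of_mem_erase hm7)
    have n76 : x7 ≠ x6 := Finset.ne_of_mem_erase hm7
    -- in S, in C10, f-values
    have hSmem : ∀ x, x ∈ T → x ∈ S ∧ f x = w := by
      intro x hx; exact Finset.mem_filter.mp hx
    obtain ⟨s1, w1⟩ := hSmem x1 t1
    obtain ⟨s2, w2⟩ := hSmem x2 t2
    obtain ⟨s3, w3⟩ := hSmem x3 t3
    obtain ⟨s4, w4⟩ := hSmem x4 t4
    obtain ⟨s5, w5⟩ := hSmem x5 t5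
    obtain ⟨s6, w6⟩ := hSmem x6 t6
    obtain ⟨s7, w7⟩ := hSmem x7 t7
    have hC : ∀ x, x ∈ S → x ∈ C10 := fun x hx => hsub hx
    -- indices for differences x1 - xk
    have hdiff : ∀ x, x ∈ S → f x = w → ∃ k : Fin 32, x1 - x = eE k := by
      intro x hx hw
      have hfe : f x1 = f x := by rw [w1, hw]
      simp only [hf, Prod.mk.injEq] at hfe
      obtain ⟨e1, e2, e3, e4, e5⟩ := hfe
      exact getIndex (hC x1 s1) (hC x hx)
        (by show x1 (0,0) - x (0,0) = 0; rw [e1, sub_self])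
        (by show x1 (0,1) - x (0,1) = 0; rw [e2, sub_self])
        (by show x1 (0,2) - x (0,2) = 0; rw [e3, sub_self])
        (by show x1 (1,3) - x (1,3) = 0; rw [e4, sub_self])
        (by show x1 (2,3) - x (2,3) = 0; rw [e5, sub_self])
    obtain ⟨k2, hk2⟩ := hdiff x2 s2 w2
    obtain ⟨k3, hk3⟩ := hdiff x3 s3 w3
    obtain ⟨k4, hk4⟩ := hdiff x4 s4 w4
    obtain ⟨k5, hk5⟩ := hdiff x5 s5 w5
    obtain ⟨k6, hk6⟩ := hdiff x6 s6 w6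
    obtain ⟨k7, hk7⟩ := hdiff x7 s7 w7
    have hk1 : x1 - x1 = eE 0 := by rw [eE_zero]; funext p; simp
    -- distances
    have hd : ∀ x y, x ∈ S → y ∈ S → x ≠ y → 5 ≤ hammingDist x y := fun x y hx hy => hdist x hx y hy
    -- adjacency facts
    have a02 : adjB 0 k2 = true := adj_of hk1 hk2 (hd _ _ s1 s2 (Ne.symm n21))
    have a03 : adjB 0 k3 = true := adj_of hk1 hk3 (hd _ _ s1 s3 (Ne.symm n31))
    have a04 : adjB 0 k4 = true := adj_of hk1 hk4 (hd _ _ s1 s4 (Ne.symm n41))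
    have a05 : adjB 0 k5 = true := adj_of hk1 hk5 (hd _ _ s1 s5 (Ne.symm n51))
    have a06 : adjB 0 k6 = true := adj_of hk1 hk6 (hd _ _ s1 s6 (Ne.symm n61))
    have a07 : adjB 0 k7 = true := adj_of hk1 hk7 (hd _ _ s1 s7 (Ne.symm n71))
    have a23 : adjB k2 k3 = true := adj_of hk2 hk3 (hd _ _ s2 s3 (Ne.symm n32))
    have a24 : adjB k2 k4 = true := adj_of hk2 hk4 (hd _ _ s2 s4 (Ne.symm n42))
    have a25 : adjB k2 k5 = true := adj_of hk2 hk5 (hd _ _ s2 s5 (Ne.symm n52))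
    have a26 : adjB k2 k6 = true := adj_of hk2 hk6 (hd _ _ s2 s6 (Ne.symm n62))
    have a27 : adjB k2 k7 = true := adj_of hk2 hk7 (hd _ _ s2 s7 (Ne.symm n72))
    have a34 : adjB k3 k4 = true := adj_of hk3 hk4 (hd _ _ s3 s4 (Ne.symm n43))
    have a35 : adjB k3 k5 = true := adj_of hk3 hk5 (hd _ _ s3 s5 (Ne.symm n53))
    have a36 : adjB k3 k6 = true := adj_of hk3 hk6 (hd _ _ s3 s6 (Ne.symm n63))
    have a37 : adjB k3 k7 = true := adj_of hk3 hk7 (hd _ _ s3 s7 (Ne.symm n73))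
    have a45 : adjB k4 k5 = true := adj_of hk4 hk5 (hd _ _ s4 s5 (Ne.symm n54))
    have a46 : adjB k4 k6 = true := adj_of hk4 hk6 (hd _ _ s4 s6 (Ne.symm n64))
    have a47 : adjB k4 k7 = true := adj_of hk4 hk7 (hd _ _ s4 s7 (Ne.symm n74))
    have a56 : adjB k5 k6 = true := adj_of hk5 hk6 (hd _ _ s5 s6 (Ne.symm n65))
    have a57 : adjB k5 k7 = true := adj_of hk5 hk7 (hd _ _ s5 s7 (Ne.symm n75))
    have a67 : adjB k6 k7 = true := adj_of hk6 hk7 (hd _ _ s6 s7 (Ne.symm n76))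
    -- build the clique chain
    have m3 : pk3 k2 k3 k4 ∈ L3a ∨ pk3 k2 k3 k4 ∈ L3b :=
      D3 k2 k3 k4 (by rw [a23, a24, a34, a02, a03, a04]; rfl)
    have hc5 : (adjB 0 k5 && adjB (u0 (pk3 k2 k3 k4)) k5 && adjB (u1 (pk3 k2 k3 k4)) k5
        && adjB (u2 (pk3 k2 k3 k4)) k5) = true := by
      rw [u0_pk3, u1_pk3, u2_pk3, a05, a25, a35, a45]; rfl
    have m4 : pk4 k2 k3 k4 k5 ∈ L4a ∨ pk4 k2 k3 k4 k5 ∈ L4b ∨ pk4 k2 k3 k4 k5 ∈ L4c := by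
      rw [← pk4_eq]
      exact m3.elim (fun h => D4a _ h k5 hc5) (fun h => D4b _ h k5 hc5)
    have hc6 : (adjB 0 k6 && adjB (u0 (pk4 k2 k3 k4 k5)) k6 && adjB (u1 (pk4 k2 k3 k4 k5)) k6
        && adjB (u2 (pk4 k2 k3 k4 k5)) k6 && adjB (u3 (pk4 k2 k3 k4 k5)) k6) = true := by
      rw [u0_pk4, u1_pk4, u2_pk4, u3_pk4, a06, a26, a36, a46, a56]; rfl
    have m5 : pk5 k2 k3 k4 k5 k6 ∈ L5a ∨ pk5 k2 k3 k4 k5 k6 ∈ L5b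
        ∨ pk5 k2 k3 k4 k5 k6 ∈ L5c := by
      rw [← pk5_eq]
      rcases m4 with h|h|h
      · exact D5a _ h k6 hc6
      · exact D5b _ h k6 hc6
      · exact D5c _ h k6 hc6
    have hc7 : (adjB 0 k7 && adjB (u0 (pk5 k2 k3 k4 k5 k6)) k7
        && adjB (u1 (pk5 k2 k3 k4 k5 k6)) k7 && adjB (u2 (pk5 k2 k3 k4 k5 k6)) k7
        && adjB (u3 (pk5 k2 k3 k4 k5 k6)) k7 && adjB (u4 (pk5 k2 k3 k4 k5 k6)) k7) = true := by
      rw [u0_pk5, u1_pk5, u2_pk5, u3_pk5, u4_pk5, a07, a27, a37, a47, a57, a67]; rfl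
    rcases m5 with h|h|h
    · exact D6a _ h k7 hc7
    · exact D6b _ h k7 hc7
    · exact D6c _ h k7 hc7
  calc S.card ≤ 6 * (S.image f).card := Finset.card_le_mul_card_image S 6
        (fun a _ => key a)
    _ ≤ 6 * 32 := by
        have h32 : Fintype.card (ZMod 2 × ZMod 2 × ZMod 2 × ZMod 2 × ZMod 2) = 32 := by
          simp
        exact Nat.mul_le_mul_left 6 (le_trans (Finset.card_le_univ _) (le_of_eq h32))
    _ ≤ 192 := by norm_num
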